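/- Let μ > 0, 0 < m < 1, and let u₊ = 0 < u₋, and suppose s and f satisfy the Rankine–Hugoniot condition s = (f(u₋) - f(0))/u₋ and g(u) := -su + f(u) - f(0) < 0 for all u ∈ (0, u₋). Define h(u) = u^{1-m} g(u)/(μm). Then for any u* ∈ (0, u₋), the initial value problem U' = h(U), U(0) = u* has a unique solution U : ℝ → (0, u₋) which is strictly decreasing and satisfies U(ξ) → u₋ as ξ → -∞ and U(ξ) → 0 as ξ → +∞. -/

import Mathlib

open Filter

theorem stmt_19 (μ m um : ℝ) (hμ : 0 < μ) (hm0 : 0 < m) (hm1 : m < 1) (hum : 0 < um)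
    (f : ℝ → ℝ) (hf : ContDiff ℝ (⊤ : ℕ∞) f) (s : ℝ) (hs : s = (f um - f 0) / um)
    (g : ℝ → ℝ) (hg : ∀ u, g u = -s * u + f u - f 0)
    (hneg : ∀ u ∈ Set.Ioo 0 um, g u < 0)
    (h : ℝ → ℝ) (hh : ∀ u, h u = u ^ ((1:ℝ) - m) * g u / (μ * m))
    (ustar : ℝ) (hustar : ustar ∈ Set.Ioo 0 um) :
    ∃ U : ℝ → ℝ,
      (∀ ξ, U ξ ∈ Set.Ioo 0 um) ∧ U 0 = ustar ∧
      (∀ ξ, HasDerivAt U (h (U ξ)) ξ) ∧ StrictAnti U ∧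
      Tendsto U atBot (nhds um) ∧ Tendsto U atTop (nhds 0) ∧
      ∀ V : ℝ → ℝ, (∀ ξ, V ξ ∈ Set.Ioo 0 um) → V 0 = ustar →
        (∀ ξ, HasDerivAt V (h (V ξ)) ξ) → V = U := by
  obtain ⟨hust1, hust2⟩ := hustar
  have hustar' : ustar ∈ Set.Ioo 0 um := ⟨hust1, hust2⟩
  have hμm : 0 < μ * m := mul_pos hμ hm0
  have hg0 : g 0 = 0 := by rw [hg]; ring
  have hgum : g um = 0 := by rw [hg, hs]; field_simp; ring
  have hgc : ContDiff ℝ 1 g := by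
    have hgfun : g = fun u => -s * u + f u - f 0 := funext hg
    rw [hgfun]
    exact ((contDiff_const.mul contDiff_id).add (hf.of_le (by simp))).sub contDiff_const
  -- h is negative on (0, um)
  have hhne : ∀ v ∈ Set.Ioo 0 um, h v < 0 := by
    intro v hv
    rw [hh]
    exact div_neg_of_neg_of_pos
      (mul_neg_of_pos_of_neg (Real.rpow_pos_of_pos hv.1 _) (hneg v hv)) hμm
  set ψ : ℝ → ℝ := fun v => (h v)⁻¹ with hψdef
  have hψneg : ∀ v ∈ Set.Ioo 0 um, ψ v < 0 := fun v hv => inv_neg''.mpr (hhne v hv)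
  have hhcontAt : ∀ v ∈ Set.Ioo 0 um, ContinuousAt h v := by
    intro v hv
    have h1 : ContinuousAt (fun u : ℝ => u ^ ((1:ℝ) - m) * g u / (μ * m)) v := by
      exact ((Real.continuousAt_rpow_const v _ (Or.inl hv.1.ne')).mul
        hgc.continuous.continuousAt).div_const _
    exact h1.congr (Filter.Eventually.of_forall fun u => (hh u).symm)
  have hψcontAt : ∀ v ∈ Set.Ioo 0 um, ContinuousAt ψ v :=
    fun v hv => (hhcontAt v hv).inv₀ (hhne v hv).ne
  have hψcontOn : ContinuousOn ψ (Set.Ioo 0 um) :=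
    fun v hv => (hψcontAt v hv).continuousWithinAt
  have hint : ∀ a b, a ∈ Set.Ioo 0 um → b ∈ Set.Ioo 0 um →
      IntervalIntegrable ψ MeasureTheory.volume a b := by
    intro a b ha hb
    exact (hψcontOn.mono ((Set.ordConnected_Ioo).uIcc_subset ha hb)).intervalIntegrable
  set φ : ℝ → ℝ := fun u => ∫ v in ustar..u, ψ v with hφdef
  have hφd : ∀ u ∈ Set.Ioo 0 um, HasDerivAt φ (ψ u) u := by
    intro u hu
    exact intervalIntegral.integral_hasDerivAt_right (hint ustar u hustar' hu)
      (ContinuousAt.stronglyMeasurableAtFilter isOpen_Ioo hψcontAt u hu) (hψcontAt u hu)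
  have hφcont : ContinuousOn φ (Set.Ioo 0 um) :=
    fun u hu => ((hφd u hu).continuousAt).continuousWithinAt
  have hφanti : StrictAntiOn φ (Set.Ioo 0 um) := by
    apply strictAntiOn_of_deriv_neg (convex_Ioo 0 um) hφcont
    intro x hx
    rw [interior_Ioo] at hx
    rw [(hφd x hx).deriv]
    exact hψneg x hx
  have hφ0 : φ ustar = 0 := intervalIntegral.integral_same
  -- Lipschitz bound for g
  obtain ⟨C, hC⟩ := (isCompact_Icc (a := (0:ℝ)) (b := um)).exists_bound_of_continuousOn
    ((hgc.continuous_deriv le_rfl).continuousOn)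
  set K : NNReal := (max C 0 + 1).toNNReal with hKdef
  have hKpos : 0 < (K : ℝ) := by
    rw [hKdef, Real.coe_toNNReal _ (by positivity)]
    positivity
  have hKlip : LipschitzOnWith K g (Set.Icc 0 um) := by
    apply (convex_Icc 0 um).lipschitzOnWith_of_nnnorm_deriv_le
      (fun x _ => (hgc.differentiable one_ne_zero).differentiableAt)
    intro x hx
    have h1 : ‖deriv g x‖ ≤ (K : ℝ) := by
      rw [hKdef, Real.coe_toNNReal _ (by positivity)]
      calc ‖deriv g x‖ ≤ C := hC x hx
        _ ≤ max C 0 + 1 := by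
            have := le_max_left C 0; linarith
    exact_mod_cast h1
  have hKb1 : ∀ v ∈ Set.Icc 0 um, |g v| ≤ K * v := by
    intro v hv
    have := hKlip.dist_le_mul v hv 0 ⟨le_refl 0, hum.le⟩
    rw [Real.dist_eq, Real.dist_eq, hg0, sub_zero, sub_zero] at this
    rwa [abs_of_nonneg hv.1] at this
  have hKb2 : ∀ v ∈ Set.Icc 0 um, |g v| ≤ K * (um - v) := by
    intro v hv
    have := hKlip.dist_le_mul v hv um ⟨hum.le, le_refl um⟩
    rw [Real.dist_eq, Real.dist_eq, hgum, sub_zero] at this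
    rwa [abs_sub_comm, abs_of_nonneg (show (0:ℝ) ≤ um - v by linarith [hv.2])] at this
  set c1 : ℝ := μ * m / K with hc1def
  have hc1 : 0 < c1 := div_pos hμm hKpos
  set c2 : ℝ := μ * m / (K * um ^ ((1:ℝ) - m)) with hc2def
  have humpow : 0 < um ^ ((1:ℝ) - m) := Real.rpow_pos_of_pos hum _
  have hc2 : 0 < c2 := div_pos hμm (mul_pos hKpos humpow)
  -- pointwise lower bounds on -ψ
  have hhb1 : ∀ v ∈ Set.Ioo 0 um, v ≤ 1 → c1 * v⁻¹ ≤ -ψ v := by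
    intro v hv hv1
    have hgv : -g v ≤ K * v := by
      have := hKb1 v ⟨hv.1.le, hv.2.le⟩
      have := neg_abs_le (g v)
      linarith [abs_nonneg (g v), (abs_le.mp (hKb1 v ⟨hv.1.le, hv.2.le⟩)).1]
    have hrp : v ^ ((1:ℝ) - m) ≤ 1 := Real.rpow_le_one hv.1.le hv1 (by linarith)
    have hrp0 : 0 < v ^ ((1:ℝ) - m) := Real.rpow_pos_of_pos hv.1 _
    have hhv : -h v ≤ K * v / (μ * m) := by
      rw [hh]
      have heq : -(v ^ ((1:ℝ) - m) * g v / (μ * m)) = v ^ ((1:ℝ) - m) * (-g v) / (μ * m) := by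
        ring
      rw [heq]
      apply div_le_div_of_nonneg_right _ hμm.le
      calc v ^ ((1:ℝ) - m) * (-g v) ≤ 1 * (K * v) :=
            mul_le_mul hrp hgv (by linarith [hneg v hv]) zero_le_one
        _ = K * v := one_mul _
    have hψv : -ψ v = (-h v)⁻¹ := by rw [hψdef]; simp [inv_neg]
    rw [hψv]
    have h2 : ((K : ℝ) * v / (μ * m))⁻¹ ≤ (-h v)⁻¹ :=
      inv_anti₀ (by linarith [hhne v hv]) hhv
    have h3 : ((K : ℝ) * v / (μ * m))⁻¹ = c1 * v⁻¹ := by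
      rw [hc1def]
      field_simp
    linarith [h2, h3.symm.le]
  have hhb2 : ∀ v ∈ Set.Ioo 0 um, c2 * (um - v)⁻¹ ≤ -ψ v := by
    intro v hv
    have hgv : -g v ≤ K * (um - v) := by
      linarith [(abs_le.mp (hKb2 v ⟨hv.1.le, hv.2.le⟩)).1]
    have hrp : v ^ ((1:ℝ) - m) ≤ um ^ ((1:ℝ) - m) :=
      Real.rpow_le_rpow hv.1.le hv.2.le (by linarith)
    have hrp0 : 0 < v ^ ((1:ℝ) - m) := Real.rpow_pos_of_pos hv.1 _
    have hhv : -h v ≤ um ^ ((1:ℝ) - m) * (K * (um - v)) / (μ * m) := by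
      rw [hh]
      have heq : -(v ^ ((1:ℝ) - m) * g v / (μ * m)) = v ^ ((1:ℝ) - m) * (-g v) / (μ * m) := by
        ring
      rw [heq]
      apply div_le_div_of_nonneg_right _ hμm.le
      exact mul_le_mul hrp hgv (by linarith [hneg v hv]) humpow.le
    have hψv : -ψ v = (-h v)⁻¹ := by rw [hψdef]; simp [inv_neg]
    rw [hψv]
    have h2 : (um ^ ((1:ℝ) - m) * ((K : ℝ) * (um - v)) / (μ * m))⁻¹ ≤ (-h v)⁻¹ :=
      inv_anti₀ (by linarith [hhne v hv]) hhv
    have h3 : (um ^ ((1:ℝ) - m) * ((K : ℝ) * (um - v)) / (μ * m))⁻¹ = c2 * (um - v)⁻¹ := by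
      rw [hc2def]
      have humv : um - v ≠ 0 := by have := hv.2; intro hc; linarith [sub_eq_zero.mp hc]
      field_simp
    linarith [h2, h3.symm.le]
  -- divergence of φ at the endpoints
  set b1 : ℝ := min ustar 1 with hb1def
  have hb1mem : b1 ∈ Set.Ioo 0 um :=
    ⟨lt_min hust1 one_pos, lt_of_le_of_lt (min_le_left _ _) hust2⟩
  have hb1le : b1 ≤ ustar := min_le_left _ _
  have keytop : ∀ u ∈ Set.Ioo 0 b1, c1 * (Real.log b1 - Real.log u) + φ b1 ≤ φ u := by
    intro u hu
    have humem : u ∈ Set.Ioo 0 um := ⟨hu.1, lt_trans hu.2 hb1mem.2⟩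
    have hIoo : Set.Icc u b1 ⊆ Set.Ioo 0 um := fun x hx =>
      ⟨lt_of_lt_of_le hu.1 hx.1, lt_of_le_of_lt hx.2 hb1mem.2⟩
    have hsplit : φ b1 + ∫ v in b1..u, ψ v = φ u := by
      rw [hφdef]
      exact intervalIntegral.integral_add_adjacent_intervals
        (hint ustar b1 hustar' hb1mem) (hint b1 u hb1mem humem)
    have hci : IntervalIntegrable (fun v => c1 * v⁻¹) MeasureTheory.volume u b1 := by
      apply ContinuousOn.intervalIntegrable_of_Icc hu.2.le
      apply ContinuousOn.mul continuousOn_const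
      exact continuousOn_inv₀.mono (fun x hx => ne_of_gt (lt_of_lt_of_le hu.1 hx.1))
    have hmono : ∫ v in u..b1, c1 * v⁻¹ ≤ ∫ v in u..b1, -ψ v := by
      apply intervalIntegral.integral_mono_on hu.2.le hci
        ((hint u b1 humem hb1mem).neg)
      intro x hx
      exact hhb1 x (hIoo hx) (le_trans hx.2 (min_le_right ustar 1))
    have hcalc : ∫ v in u..b1, c1 * v⁻¹ = c1 * (Real.log b1 - Real.log u) := by
      rw [intervalIntegral.integral_const_mul, integral_inv, Real.log_div (ne_of_gt hb1mem.1)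
        (ne_of_gt hu.1)]
      rw [Set.uIcc_of_le hu.2.le]
      exact fun h0 => absurd h0.1 (not_le.mpr hu.1)
    have hflip : ∫ v in b1..u, ψ v = ∫ v in u..b1, -ψ v := by
      rw [intervalIntegral.integral_neg]
      exact intervalIntegral.integral_symm u b1
    linarith [hmono, hcalc.symm.le, hsplit, hflip]
  have htop : Tendsto φ (nhdsWithin 0 (Set.Ioi 0)) atTop := by
    have hlim : Tendsto (fun u => c1 * (Real.log b1 - Real.log u) + φ b1)
        (nhdsWithin 0 (Set.Ioi 0)) atTop := by
      apply tendsto_atTop_add_const_right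
      apply Tendsto.const_mul_atTop hc1
      have h1 : Tendsto (fun u : ℝ => -Real.log u) (nhdsWithin 0 (Set.Ioi 0)) atTop :=
        tendsto_neg_atBot_atTop.comp Real.tendsto_log_nhdsGT_zero
      have h2 := tendsto_atTop_add_const_left _ (Real.log b1) h1
      simpa [sub_eq_add_neg] using h2
    apply tendsto_atTop_mono' _ _ hlim
    filter_upwards [Ioo_mem_nhdsGT_of_mem (Set.mem_Ico.mpr ⟨le_refl 0, hb1mem.1⟩)] with u hu
    exact keytop u hu
  have keybot : ∀ u ∈ Set.Ico ustar um,
      φ u ≤ c2 * Real.log (um - u) - c2 * Real.log (um - ustar) := by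
    intro u hu
    have humem : u ∈ Set.Ioo 0 um := ⟨lt_of_lt_of_le hust1 hu.1, hu.2⟩
    have hIoo : Set.Icc ustar u ⊆ Set.Ioo 0 um := fun x hx =>
      ⟨lt_of_lt_of_le hust1 hx.1, lt_of_le_of_lt hx.2 hu.2⟩
    have hci : IntervalIntegrable (fun v => c2 * (um - v)⁻¹) MeasureTheory.volume ustar u := by
      apply ContinuousOn.intervalIntegrable_of_Icc hu.1
      apply ContinuousOn.mul continuousOn_const
      apply ContinuousOn.inv₀ (continuousOn_const.sub continuousOn_id)
      intro x hx
      have := lt_of_le_of_lt hx.2 hu.2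
      intro hc
      rw [Pi.sub_apply, sub_eq_zero] at hc
      exact absurd hc.symm (ne_of_lt this)
    have hmono : ∫ v in ustar..u, c2 * (um - v)⁻¹ ≤ ∫ v in ustar..u, -ψ v := by
      apply intervalIntegral.integral_mono_on hu.1 hci ((hint ustar u hustar' humem).neg)
      intro x hx
      exact hhb2 x (hIoo hx)
    have hcalc : ∫ v in ustar..u, c2 * (um - v)⁻¹
        = c2 * (Real.log (um - ustar) - Real.log (um - u)) := by
      rw [intervalIntegral.integral_const_mul]
      have hcomp := intervalIntegral.integral_comp_sub_left (a := ustar) (b := u)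
        (fun v : ℝ => v⁻¹) um
      rw [hcomp, integral_inv, Real.log_div (by linarith [hu.2] : um - ustar ≠ 0)
        (by linarith [hu.2] : um - u ≠ 0)]
      rw [Set.uIcc_of_le (by linarith [hu.1] : um - u ≤ um - ustar)]
      exact fun h0 => absurd h0.1 (not_le.mpr (by linarith [hu.2]))
    have hflip : φ u = -∫ v in ustar..u, -ψ v := by
      rw [hφdef, intervalIntegral.integral_neg, neg_neg]
    rw [hflip]
    have := neg_le_neg hmono
    rw [hcalc] at this
    linarith [this]
  have hbot : Tendsto φ (nhdsWithin um (Set.Iio um)) atBot := by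
    have hlim : Tendsto (fun u => c2 * Real.log (um - u) - c2 * Real.log (um - ustar))
        (nhdsWithin um (Set.Iio um)) atBot := by
      apply tendsto_atBot_add_const_right
      apply Tendsto.const_mul_atBot hc2
      apply Real.tendsto_log_nhdsGT_zero.comp
      apply tendsto_nhdsWithin_of_tendsto_nhds_of_eventually_within
      · have : Tendsto (fun u : ℝ => um - u) (nhds um) (nhds (um - um)) :=
          (continuous_const.sub continuous_id).tendsto um
        rw [sub_self] at this
        exact this.mono_left nhdsWithin_le_nhds
      · filter_upwards [self_mem_nhdsWithin] with u hu
        simpa using sub_pos.mpr (Set.mem_Iio.mp hu)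
    apply tendsto_atBot_mono' _ _ hlim
    filter_upwards [Ico_mem_nhdsLT_of_mem (Set.mem_Ioc.mpr ⟨hust2, le_refl um⟩)] with u hu
    exact keybot u hu
  -- surjectivity of φ : Ioo 0 um → ℝ
  have hsurj : ∀ ξ : ℝ, ∃ u ∈ Set.Ioo 0 um, φ u = ξ := by
    intro ξ
    have he1 : ∃ u1, u1 ∈ Set.Ioo 0 um ∧ ξ < φ u1 := by
      have h1 : ∀ᶠ u in nhdsWithin 0 (Set.Ioi 0), u ∈ Set.Ioo 0 um ∧ ξ < φ u := by
        filter_upwards [Ioo_mem_nhdsGT_of_mem (Set.mem_Ico.mpr ⟨le_refl 0, hum⟩),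
          htop.eventually (eventually_gt_atTop ξ)] with u hu h2
        exact ⟨hu, h2⟩
      exact h1.exists
    have he2 : ∃ u2, u2 ∈ Set.Ioo 0 um ∧ φ u2 < ξ := by
      have h1 : ∀ᶠ u in nhdsWithin um (Set.Iio um), u ∈ Set.Ioo 0 um ∧ φ u < ξ := by
        filter_upwards [Ioo_mem_nhdsLT_of_mem (Set.mem_Ioc.mpr ⟨hum, le_refl um⟩),
          hbot.eventually (eventually_lt_atBot ξ)] with u hu h2
        exact ⟨hu, h2⟩
      exact h1.exists
    obtain ⟨u1, hu1m, hu1ξ⟩ := he1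
    obtain ⟨u2, hu2m, hu2ξ⟩ := he2
    have h12 : u1 < u2 := (hφanti.lt_iff_gt hu2m hu1m).mp (lt_trans hu2ξ hu1ξ)
    have hIcc : Set.Icc u1 u2 ⊆ Set.Ioo 0 um := fun x hx =>
      ⟨lt_of_lt_of_le hu1m.1 hx.1, lt_of_le_of_lt hx.2 hu2m.2⟩
    have hsub := intermediate_value_Icc' h12.le (hφcont.mono hIcc)
    obtain ⟨u, hu, hφu⟩ := hsub ⟨hu2ξ.le, hu1ξ.le⟩
    exact ⟨u, hIcc hu, hφu⟩
  choose U hUmem hUeq using hsurj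
  have hinj := hφanti.injOn
  have hU0 : U 0 = ustar := hinj (hUmem 0) hustar' ((hUeq 0).trans hφ0.symm)
  -- comparison lemmas for the inverse
  have hlt1 : ∀ u ∈ Set.Ioo 0 um, ∀ ξ : ℝ, ξ < φ u → u < U ξ := by
    intro u hu ξ hξ
    by_contra hc
    push_neg at hc
    rcases lt_or_eq_of_le hc with h1 | h1
    · have := hφanti (hUmem ξ) hu h1
      rw [hUeq ξ] at this
      linarith
    · rw [← h1, hUeq ξ] at hξ
      exact lt_irrefl _ hξ
  have hlt2 : ∀ u ∈ Set.Ioo 0 um, ∀ ξ : ℝ, φ u < ξ → U ξ < u := by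
    intro u hu ξ hξ
    by_contra hc
    push_neg at hc
    rcases lt_or_eq_of_le hc with h1 | h1
    · have := hφanti hu (hUmem ξ) h1
      rw [hUeq ξ] at this
      linarith
    · rw [h1, hUeq ξ] at hξ
      exact lt_irrefl _ hξ
  have hUanti : StrictAnti U := by
    intro a b hab
    apply hlt2 (U a) (hUmem a) b
    rw [hUeq a]
    exact hab
  have hUcont : ∀ ξ : ℝ, ContinuousAt U ξ := by
    intro ξ
    have hx := hUmem ξ
    rw [ContinuousAt, tendsto_order]
    constructor
    · intro a' ha'
      set u1 : ℝ := max a' (U ξ / 2) with hu1def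
      have hlt : u1 < U ξ := max_lt ha' (half_lt_self hx.1)
      have hmem : u1 ∈ Set.Ioo 0 um :=
        ⟨lt_of_lt_of_le (half_pos hx.1) (le_max_right _ _), lt_trans hlt hx.2⟩
      have hφlt : ξ < φ u1 := by
        have := hφanti hmem hx hlt
        rwa [hUeq ξ] at this
      filter_upwards [Iio_mem_nhds hφlt] with y hy
      exact lt_of_le_of_lt (le_max_left _ _) (hlt1 u1 hmem y hy)
    · intro a' ha'
      set u2 : ℝ := min a' ((U ξ + um) / 2) with hu2def
      have hgt : U ξ < u2 := lt_min ha' (by linarith [hx.2])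
      have hmem : u2 ∈ Set.Ioo 0 um :=
        ⟨lt_trans hx.1 hgt, lt_of_le_of_lt (min_le_right _ _) (by linarith [hx.1, hx.2])⟩
      have hφgt : φ u2 < ξ := by
        have := hφanti hx hmem hgt
        rwa [hUeq ξ] at this
      filter_upwards [Ioi_mem_nhds hφgt] with y hy
      exact lt_of_lt_of_le (hlt2 u2 hmem y hy) (min_le_left _ _)
  have hUd : ∀ ξ : ℝ, HasDerivAt U (h (U ξ)) ξ := by
    intro ξ
    have h1 : HasDerivAt U (ψ (U ξ))⁻¹ ξ :=
      HasDerivAt.of_local_left_inverse (hUcont ξ) (hφd _ (hUmem ξ))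
        (ne_of_lt (hψneg _ (hUmem ξ))) (Filter.Eventually.of_forall hUeq)
    simpa [hψdef, inv_inv] using h1
  have hUtop : Tendsto U atBot (nhds um) := by
    rw [tendsto_order]
    constructor
    · intro a' ha'
      set b : ℝ := max a' ustar with hbdef
      have hb : b ∈ Set.Ioo 0 um := ⟨lt_of_lt_of_le hust1 (le_max_right _ _), max_lt ha' hust2⟩
      filter_upwards [eventually_lt_atBot (φ b)] with ξ hξ
      exact lt_of_le_of_lt (le_max_left _ _) (hlt1 b hb ξ hξ)
    · intro a' ha'
      filter_upwards with ξ
      exact lt_trans (hUmem ξ).2 ha'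
  have hUbot : Tendsto U atTop (nhds 0) := by
    rw [tendsto_order]
    constructor
    · intro a' ha'
      filter_upwards with ξ
      exact lt_of_lt_of_le ha' (hUmem ξ).1.le
    · intro a' ha'
      set b : ℝ := min a' ustar with hbdef
      have hb : b ∈ Set.Ioo 0 um := ⟨lt_min ha' hust1, lt_of_le_of_lt (min_le_right _ _) hust2⟩
      filter_upwards [eventually_gt_atTop (φ b)] with ξ hξ
      exact lt_of_lt_of_le (hlt2 b hb ξ hξ) (min_le_left _ _)
  refine ⟨U, hUmem, hU0, hUd, hUanti, hUtop, hUbot, ?_⟩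
  -- uniqueness
  intro V hVmem hV0 hVd
  have hW : ∀ ξ : ℝ, HasDerivAt (fun t => φ (V t) - t) 0 ξ := by
    intro ξ
    have h1 : HasDerivAt (fun t => φ (V t)) (ψ (V ξ) * h (V ξ)) ξ :=
      (hφd _ (hVmem ξ)).comp ξ (hVd ξ)
    have h2 : ψ (V ξ) * h (V ξ) = 1 := by
      rw [hψdef]
      exact inv_mul_cancel₀ (ne_of_lt (hhne _ (hVmem ξ)))
    have h3 := h1.sub (hasDerivAt_id ξ)
    rw [h2] at h3
    rw [sub_self] at h3; exact h3
  have hconst := is_const_of_deriv_eq_zero (f := fun t => φ (V t) - t)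
    (fun x => (hW x).differentiableAt) (fun x => (hW x).deriv)
  funext ξ
  have h4 : φ (V ξ) - ξ = φ (V 0) - 0 := hconst ξ 0
  rw [hV0, hφ0] at h4
  have hφV : φ (V ξ) = ξ := by linarith
  exact hinj (hVmem ξ) (hUmem ξ) (hφV.trans (hUeq ξ).symm)
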